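/- Dual norm identity underlying the robust-Lasso equivalence: for any vector u ∈ ℝ^K with u ≠ 0 and any a ∈ ℝ^K, there exists δG with columns δG_i = c·sign(a_i)·(u/‖u‖₂) satisfying ‖δG_i‖₂ ≤ c and ‖u + δG a‖₂ = ‖u‖₂ + c‖a‖₁. -/
import Mathlib


open Finset

noncomputable def e2 {K : ℕ} (v : Fin K → ℝ) : ℝ :=
  Real.sqrt (∑ i, (v i) ^ 2)

noncomputable def l1 {K : ℕ} (v : Fin K → ℝ) : ℝ := ∑ i, |v i|

lemma e2_nonneg {K : ℕ} (v : Fin K → ℝ) : 0 ≤ e2 v := Real.sqrt_nonneg _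

lemma e2_smul {K : ℕ} (t : ℝ) (v : Fin K → ℝ) :
    e2 (fun j => t * v j) = |t| * e2 v := by
  unfold e2
  rw [← Real.sqrt_sq_eq_abs, ← Real.sqrt_mul (sq_nonneg t), Finset.mul_sum]
  congr 1
  apply Finset.sum_congr rfl
  intro j _
  ring

lemma e2_pos {K : ℕ} (v : Fin K → ℝ) (hv : v ≠ 0) : 0 < e2 v := by
  obtain ⟨j, hj⟩ : ∃ j, v j ≠ 0 := by
    by_contra h
    push_neg at h
    exact hv (funext h)
  unfold e2
  apply Real.sqrt_pos.mpr
  apply Finset.sum_pos' (fun i _ => sq_nonneg _)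
  exact ⟨j, Finset.mem_univ j, by positivity⟩

lemma mySign_mul_self (x : ℝ) : Real.sign x * x = |x| := by
  rcases lt_trichotomy x 0 with h | h | h
  · rw [Real.sign_of_neg h, abs_of_neg h]; ring
  · simp [h]
  · rw [Real.sign_of_pos h, abs_of_pos h]; ring

/-- Dual-norm identity: the perturbation with columns `c · sign(aᵢ) · u/‖u‖₂` is admissible and
attains `‖u + δG a‖₂ = ‖u‖₂ + c‖a‖₁`. -/
theorem dual_norm_attained (K : ℕ) (u a : Fin K → ℝ) (hu : u ≠ 0)
    (c : ℝ) (hc : 0 ≤ c) :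
    ∃ δG : Matrix (Fin K) (Fin K) ℝ,
      (∀ i j : Fin K, δG j i = c * Real.sign (a i) * (u j / e2 u)) ∧
      (∀ i : Fin K, e2 (fun j => δG j i) ≤ c) ∧
      e2 (u + δG.mulVec a) = e2 u + c * l1 a := by
  have hpos : 0 < e2 u := e2_pos u hu
  refine ⟨fun j i => c * Real.sign (a i) * (u j / e2 u), fun i j => rfl, ?_, ?_⟩
  · intro i
    have : (fun j => c * Real.sign (a i) * (u j / e2 u))
        = fun j => (c * Real.sign (a i) / e2 u) * u j := by
      funext j; ring
    rw [this, e2_smul]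
    have hs : |Real.sign (a i)| ≤ 1 := by
      rcases lt_trichotomy (a i) 0 with h | h | h
      · simp [Real.sign_of_neg h]
      · simp [h]
      · simp [Real.sign_of_pos h]
    calc |c * Real.sign (a i) / e2 u| * e2 u
        = c * |Real.sign (a i)| / e2 u * e2 u := by
          rw [abs_div, abs_mul, abs_of_nonneg hc, abs_of_pos hpos]
      _ = c * |Real.sign (a i)| := by field_simp
      _ ≤ c * 1 := mul_le_mul_of_nonneg_left hs hc
      _ = c := mul_one c
  · have hl1 : 0 ≤ l1 a := Finset.sum_nonneg fun i _ => abs_nonneg _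
    have hmv : ∀ j, (Matrix.mulVec (fun j i => c * Real.sign (a i) * (u j / e2 u)) a) j
        = (c * l1 a / e2 u) * u j := by
      intro j
      unfold Matrix.mulVec dotProduct
      have : ∀ i ∈ Finset.univ, c * Real.sign (a i) * (u j / e2 u) * a i
          = (c * u j / e2 u) * |a i| := by
        intro i _
        rw [← mySign_mul_self (a i)]
        ring
      rw [Finset.sum_congr rfl this, ← Finset.mul_sum]
      unfold l1
      ring
    have : u + Matrix.mulVec (fun j i => c * Real.sign (a i) * (u j / e2 u)) a
        = fun j => (1 + c * l1 a / e2 u) * u j := by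
      funext j
      simp only [Pi.add_apply, hmv]
      ring
    rw [this, e2_smul]
    have h1 : 0 ≤ 1 + c * l1 a / e2 u := by positivity
    rw [abs_of_nonneg h1]
    field_simp
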